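/- For any Bailey pair (α_n, β_n) relative to a (β_n = ∑_{k=0}^n α_k/((q;q)_{n-k}(aq;q)_{n+k})) and any integer m ≥ 0: [(aq;q)_m (−1)^m q^{m(m+1)/2} / (q;q)_m] ∑_{n=0}^{m} (q^{−m}; q)_n (a q^{1+m}; q)_n β_n = ∑_{n=0}^{m} α_n. -/
import Mathlib

noncomputable def qp (q x : ℂ) (n : ℕ) : ℂ := ∏ i ∈ Finset.range n, (1 - x * q ^ i)

lemma qp_succ (q x : ℂ) (n : ℕ) : qp q x (n + 1) = qp q x n * (1 - x * q ^ n) :=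
  Finset.prod_range_succ _ _

lemma qp_zero (q x : ℂ) : qp q x 0 = 1 := rfl

lemma one_sub_pow_ne (q : ℂ) (h1 : ‖q‖ < 1) (j : ℕ) : (1 : ℂ) - q ^ (j + 1) ≠ 0 := by
  intro h
  have hq : q ^ (j + 1) = 1 := by linear_combination -h
  have : ‖q ^ (j + 1)‖ < 1 := by
    rw [norm_pow]
    exact pow_lt_one₀ (norm_nonneg _) h1 (Nat.succ_ne_zero j)
  rw [hq] at this; simp at this

lemma qpq_ne (q : ℂ) (h1 : ‖q‖ < 1) (n : ℕ) : qp q q n ≠ 0 := by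
  apply Finset.prod_ne_zero_iff.2
  intro i _
  have : (1 : ℂ) - q ^ (i + 1) ≠ 0 := one_sub_pow_ne q h1 i
  rwa [pow_succ, mul_comm (q ^ i) q] at this

lemma qpa_ne (q a : ℂ) (ha : ∀ j : ℕ, 1 - a * q ^ (j + 1) ≠ 0) (n : ℕ) :
    qp q (a * q) n ≠ 0 := by
  apply Finset.prod_ne_zero_iff.2
  intro i _
  have := ha i
  rwa [show a * q ^ (i + 1) = a * q * q ^ i by ring] at this

lemma qpam_ne (q a : ℂ) (ha : ∀ j : ℕ, 1 - a * q ^ (j + 1) ≠ 0) (m n : ℕ) :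
    qp q (a * q ^ (m + 1)) n ≠ 0 := by
  apply Finset.prod_ne_zero_iff.2
  intro i _
  have := ha (m + i)
  rwa [show a * q ^ (m + i + 1) = a * q ^ (m + 1) * q ^ i by ring] at this

lemma tri (m : ℕ) : m * (m - 1) / 2 + m * (m + 1) / 2 = m * m := by
  cases m with
  | zero => rfl
  | succ n =>
    obtain ⟨b, hb⟩ := Nat.even_mul_succ_self n
    have e0 : n * (n + 1) = n * n + n := by ring
    have e1 : (n + 1) * ((n + 1) - 1) = n * n + n := by simp; ring
    have e2 : (n + 1) * ((n + 1) + 1) = n * n + 3 * n + 2 := by ring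
    have e3 : (n + 1) * (n + 1) = n * n + 2 * n + 1 := by ring
    omega

lemma F1 (q : ℂ) (hq : q ≠ 0) (m : ℕ) :
    qp q (q ^ (-(m : ℤ))) m * q ^ (m * (m + 1) / 2) = (-1 : ℂ) ^ m * qp q q m := by
  have hw : q ^ (-(m : ℤ)) = (q ^ m)⁻¹ := by
    rw [zpow_neg, zpow_natCast]
  have hwm : q ^ (-(m : ℤ)) * q ^ m = 1 := by
    rw [hw]; field_simp
  have step1 : qp q (q ^ (-(m : ℤ))) m
      = ∏ i ∈ Finset.range m, (-(q ^ (-(m : ℤ)) * q ^ i) * (1 - q ^ (m - i))) := by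
    apply Finset.prod_congr rfl
    intro i hi
    have hi' : i ≤ m := le_of_lt (Finset.mem_range.1 hi)
    have hpow : q ^ i * q ^ (m - i) = q ^ m := by
      rw [← pow_add]; congr 1; omega
    have : q ^ (-(m : ℤ)) * q ^ i * q ^ (m - i) = 1 := by
      rw [mul_assoc, hpow, hwm]
    linear_combination -this
  rw [step1, Finset.prod_mul_distrib]
  have step2 : ∏ i ∈ Finset.range m, (1 - q ^ (m - i)) = qp q q m := by
    have hqp : qp q q m = ∏ j ∈ Finset.range m, (1 - q ^ (j + 1)) := by
      apply Finset.prod_congr rfl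
      intro i _
      rw [pow_succ, mul_comm (q ^ i) q]
    rw [hqp, ← Finset.prod_range_reflect (fun j => 1 - q ^ (j + 1)) m]
    apply Finset.prod_congr rfl
    intro i hi
    have hi' : i < m := Finset.mem_range.1 hi
    congr 2
    omega
  rw [step2]
  have step3 : ∏ i ∈ Finset.range m, (-(q ^ (-(m : ℤ)) * q ^ i))
      = (-1 : ℂ) ^ m * (q ^ (-(m : ℤ))) ^ m * q ^ (m * (m - 1) / 2) := by
    have : ∀ i, -(q ^ (-(m : ℤ)) * q ^ i) = (-(q ^ (-(m : ℤ)))) * q ^ i := by intro i; ring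
    simp only [this]
    rw [Finset.prod_mul_distrib, Finset.prod_const, Finset.prod_pow_eq_pow_sum,
      Finset.sum_range_id, neg_pow, Finset.card_range]
  rw [step3]
  have step4 : (q ^ (-(m : ℤ))) ^ m * q ^ (m * (m - 1) / 2) * q ^ (m * (m + 1) / 2) = 1 := by
    rw [mul_assoc, ← pow_add, tri, pow_mul, ← mul_pow, hwm, one_pow]
  calc (-1 : ℂ) ^ m * (q ^ (-(m : ℤ))) ^ m * q ^ (m * (m - 1) / 2) * qp q q m * q ^ (m * (m + 1) / 2)
      = (-1 : ℂ) ^ m * qp q q m * ((q ^ (-(m : ℤ))) ^ m * q ^ (m * (m - 1) / 2) * q ^ (m * (m + 1) / 2)) := by ring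
    _ = (-1 : ℂ) ^ m * qp q q m := by rw [step4, mul_one]

lemma F2 (q a : ℂ) (m : ℕ) :
    qp q (a * q) (m + m) = qp q (a * q) m * qp q (a * q ^ (m + 1)) m := by
  unfold qp
  rw [Finset.prod_range_add]
  congr 1
  apply Finset.prod_congr rfl
  intro i _
  rw [show a * q * q ^ (m + i) = a * q ^ (m + 1) * q ^ i by ring]


open Finset

lemma step_lemma (q a : ℂ) (h0 : 0 < ‖q‖) (h1 : ‖q‖ < 1)
    (ha : ∀ j : ℕ, 1 - a * q ^ (j + 1) ≠ 0) (m k : ℕ) (hk : k < m) :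
    ∑ j ∈ Finset.range (m - k + 1),
        qp q (q ^ (-(m : ℤ))) (k + j) * qp q (a * q ^ (m + 1)) (k + j) /
          (qp q q j * qp q (a * q) (k + j + k))
      = ∑ j ∈ Finset.range (m - (k + 1) + 1),
        qp q (q ^ (-(m : ℤ))) (k + 1 + j) * qp q (a * q ^ (m + 1)) (k + 1 + j) /
          (qp q q j * qp q (a * q) (k + 1 + j + (k + 1))) := by
  have hq : q ≠ 0 := by
    intro h; rw [h] at h0; simp at h0
  set w : ℂ := q ^ (-(m : ℤ)) with hw_def
  have hw : w = (q ^ m)⁻¹ := by rw [hw_def, zpow_neg, zpow_natCast]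
  have hwm : w * q ^ m = 1 := by rw [hw]; field_simp
  set s0 : ℂ := (1 - a * q ^ (2 * k + 1)) * q ^ m /
      ((q ^ m - q ^ k) * (1 - a * q ^ (m + k + 1))) with hs0
  set v : ℕ → ℂ := fun j => (1 - q ^ j) *
      (qp q w (k + j) * qp q (a * q ^ (m + 1)) (k + j)) /
      (qp q q j * qp q (a * q) (k + j + k + 1)) with hv
  set g : ℕ → ℂ := fun j => s0 * (1 - q ^ j) *
      (qp q w (k + j) * qp q (a * q ^ (m + 1)) (k + j)) /
      (qp q q j * qp q (a * q) (k + j + k)) with hg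
  -- Step A : RHS = ∑_{j < m-k+1} v j
  have hmk : m - (k + 1) + 1 = m - k := by omega
  have stepA : ∑ j ∈ Finset.range (m - (k + 1) + 1),
        qp q w (k + 1 + j) * qp q (a * q ^ (m + 1)) (k + 1 + j) /
          (qp q q j * qp q (a * q) (k + 1 + j + (k + 1)))
      = ∑ j ∈ Finset.range (m - k + 1), v j := by
    rw [hmk, Finset.sum_range_succ' v (m - k)]
    have hv0 : v 0 = 0 := by simp [hv]
    rw [hv0, add_zero]
    apply Finset.sum_congr rfl
    intro j _
    have hX : (1 : ℂ) - q * q ^ j ≠ 0 := by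
      have := one_sub_pow_ne q h1 j
      rwa [pow_succ, mul_comm (q ^ j) q] at this
    symm
    simp only [hv]
    rw [show k + (j + 1) = k + 1 + j from by omega]
    rw [show k + 1 + j + k + 1 = k + 1 + j + (k + 1) from by omega]
    rw [qp_succ q q j,
      show (1 : ℂ) - q ^ (j + 1) = 1 - q * q ^ j from by rw [pow_succ, mul_comm (q ^ j) q]]
    rw [show qp q q j * (1 - q * q ^ j) * qp q (a * q) (k + 1 + j + (k + 1))
        = (1 - q * q ^ j) * (qp q q j * qp q (a * q) (k + 1 + j + (k + 1))) from by ring]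
    exact mul_div_mul_left _ _ hX
  rw [stepA]
  -- Step B : telescoping
  have hP : ∀ j, qp q q j ≠ 0 := qpq_ne q h1
  have hA : ∀ n, qp q (a * q) n ≠ 0 := qpa_ne q a ha
  have hD1 : q ^ m - q ^ k ≠ 0 := by
    intro h
    have hqmk : q ^ (m - k) * q ^ k = q ^ k := by
      rw [← pow_add, show m - k + k = m by omega]
      linear_combination h
    have h2 : q ^ (m - k) = 1 := by
      have hk0 : q ^ k ≠ 0 := pow_ne_zero _ hq
      field_simp at hqmk
      tauto
    have : ‖q ^ (m - k)‖ < 1 := by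
      rw [norm_pow]
      exact pow_lt_one₀ (norm_nonneg _) h1 (by omega)
    rw [h2] at this; simp at this
  have hD2 : (1 : ℂ) - a * q ^ (m + k + 1) ≠ 0 := ha (m + k)
  have tele : ∀ j, qp q w (k + j) * qp q (a * q ^ (m + 1)) (k + j) /
        (qp q q j * qp q (a * q) (k + j + k)) - v j = g (j + 1) - g j := by
    intro j
    have hX : (1 : ℂ) - q * q ^ j ≠ 0 := by
      have := one_sub_pow_ne q h1 j
      rwa [pow_succ, mul_comm (q ^ j) q] at this
    have hB : (1 : ℂ) - a * q * q ^ (k + j + k) ≠ 0 := by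
      have := ha (k + j + k)
      rwa [show a * q ^ (k + j + k + 1) = a * q * q ^ (k + j + k) by ring] at this
    have hqm : (q : ℂ) ^ m ≠ 0 := pow_ne_zero _ hq
    show _ = g (j + 1) - g j
    simp only [hv, hg]
    rw [show k + (j + 1) = k + j + 1 from by omega,
      show k + j + 1 + k = k + j + k + 1 from by omega]
    rw [qp_succ q w (k + j), qp_succ q (a * q ^ (m + 1)) (k + j), qp_succ q q j,
      qp_succ q (a * q) (k + j + k),
      show (1 : ℂ) - q ^ (j + 1) = 1 - q * q ^ j from by rw [pow_succ, mul_comm (q ^ j) q]]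
    have hD : ((q : ℂ) ^ m - q ^ k) * (1 - a * q ^ (m + k + 1)) ≠ 0 := mul_ne_zero hD1 hD2
    have scalar : 1 - (1 - q ^ j) / (1 - a * q * q ^ (k + j + k))
        = s0 * ((1 - w * q ^ (k + j)) * (1 - a * q ^ (m + 1) * q ^ (k + j)) /
            (1 - a * q * q ^ (k + j + k)) - (1 - q ^ j)) := by
      rw [hs0]
      rw [show (1 - w * q ^ (k + j)) * (1 - a * q ^ (m + 1) * q ^ (k + j)) /
            (1 - a * q * q ^ (k + j + k)) - (1 - q ^ j)
          = ((1 - w * q ^ (k + j)) * (1 - a * q ^ (m + 1) * q ^ (k + j)) -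
              (1 - q ^ j) * (1 - a * q * q ^ (k + j + k))) / (1 - a * q * q ^ (k + j + k))
          from by linear_combination (1 - q ^ j) * mul_inv_cancel₀ hB,
        show 1 - (1 - q ^ j) / (1 - a * q * q ^ (k + j + k))
          = ((1 - a * q * q ^ (k + j + k)) - (1 - q ^ j)) / (1 - a * q * q ^ (k + j + k))
          from by linear_combination (-1 : ℂ) * mul_inv_cancel₀ hB,
        div_mul_div_comm, div_eq_div_iff hB (mul_ne_zero hD hB)]
      linear_combination ((1 - a * q ^ (2 * k + 1)) * (1 - a * q * q ^ (k + j + k)) *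
        (1 - a * q ^ (m + 1) * q ^ (k + j)) * q ^ (k + j)) * hwm
    set BB : ℂ := 1 - a * q * q ^ (k + j + k) with hBBdef
    clear_value BB
    have hcan : s0 * (1 - q * q ^ j) *
          (qp q w (k + j) * (1 - w * q ^ (k + j)) *
            (qp q (a * q ^ (m + 1)) (k + j) * (1 - a * q ^ (m + 1) * q ^ (k + j)))) /
          (qp q q j * (1 - q * q ^ j) * (qp q (a * q) (k + j + k) * BB))
        = s0 * (qp q w (k + j) * (1 - w * q ^ (k + j)) *
            (qp q (a * q ^ (m + 1)) (k + j) * (1 - a * q ^ (m + 1) * q ^ (k + j)))) /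
          (qp q q j * (qp q (a * q) (k + j + k) * BB)) := by
      rw [show qp q q j * (1 - q * q ^ j) * (qp q (a * q) (k + j + k) * BB)
          = (1 - q * q ^ j) * (qp q q j * (qp q (a * q) (k + j + k) * BB)) from by ring,
        show s0 * (1 - q * q ^ j) * (qp q w (k + j) * (1 - w * q ^ (k + j)) *
            (qp q (a * q ^ (m + 1)) (k + j) * (1 - a * q ^ (m + 1) * q ^ (k + j))))
          = (1 - q * q ^ j) * (s0 * (qp q w (k + j) * (1 - w * q ^ (k + j)) *
            (qp q (a * q ^ (m + 1)) (k + j) * (1 - a * q ^ (m + 1) * q ^ (k + j))))) from by ring,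
        mul_div_mul_left _ _ hX]
    rw [hcan]
    linear_combination (qp q w (k + j) * qp q (a * q ^ (m + 1)) (k + j) /
      (qp q q j * qp q (a * q) (k + j + k))) * scalar
  calc ∑ j ∈ Finset.range (m - k + 1),
        qp q w (k + j) * qp q (a * q ^ (m + 1)) (k + j) / (qp q q j * qp q (a * q) (k + j + k))
      = ∑ j ∈ Finset.range (m - k + 1), (v j + (g (j + 1) - g j)) := by
        apply Finset.sum_congr rfl
        intro j _
        have := tele j
        linear_combination this
    _ = ∑ j ∈ Finset.range (m - k + 1), v j + (g (m - k + 1) - g 0) := by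
        rw [Finset.sum_add_distrib, Finset.sum_range_sub g (m - k + 1)]
    _ = ∑ j ∈ Finset.range (m - k + 1), v j := by
        have hg0 : g 0 = 0 := by simp [hg]
        have hgtop : g (m - k + 1) = 0 := by
          have hidx : k + (m - k + 1) = m + 1 := by omega
          have hz : qp q w (m + 1) = 0 := by
            apply Finset.prod_eq_zero (Finset.self_mem_range_succ m)
            rw [hwm]; ring
          rw [hg]
          simp only [hidx, hz]
          simp
        rw [hg0, hgtop]; ring

lemma tri_swap (N : ℕ) (f : ℕ → ℕ → ℂ) :
    ∑ n ∈ Finset.range (N + 1), ∑ k ∈ Finset.range (n + 1), f n k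
      = ∑ k ∈ Finset.range (N + 1), ∑ n ∈ Finset.Ico k (N + 1), f n k := by
  have h := Finset.sum_Ico_Ico_comm 0 (N + 1) (fun i j => f j i)
  simpa only [Finset.range_eq_Ico] using h.symm

lemma key_lemma (q a : ℂ) (h0 : 0 < ‖q‖) (h1 : ‖q‖ < 1)
    (ha : ∀ j : ℕ, 1 - a * q ^ (j + 1) ≠ 0) (m : ℕ) :
    ∀ d k : ℕ, k + d = m →
      ∑ j ∈ Finset.range (m - k + 1),
          qp q (q ^ (-(m : ℤ))) (k + j) * qp q (a * q ^ (m + 1)) (k + j) /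
            (qp q q j * qp q (a * q) (k + j + k))
        = qp q (q ^ (-(m : ℤ))) m * qp q (a * q ^ (m + 1)) m / qp q (a * q) (m + m) := by
  intro d
  induction d with
  | zero =>
    intro k hk
    have hkm : k = m := by omega
    subst hkm
    rw [show k - k + 1 = 1 from by omega, Finset.sum_range_one]
    show qp q (q ^ (-(k : ℤ))) (k + 0) * qp q (a * q ^ (k + 1)) (k + 0) /
        (qp q q 0 * qp q (a * q) (k + 0 + k))
      = qp q (q ^ (-(k : ℤ))) k * qp q (a * q ^ (k + 1)) k / qp q (a * q) (k + k)
    rw [Nat.add_zero, qp_zero, one_mul]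
  | succ d ih =>
    intro k hk
    have hkm : k < m := by omega
    rw [step_lemma q a h0 h1 ha m k hkm]
    exact ih (k + 1) (by omega)

theorem stmt17 (q a : ℂ) (h0 : 0 < ‖q‖) (h1 : ‖q‖ < 1)
    (ha : ∀ j : ℕ, 1 - a * q ^ (j + 1) ≠ 0) (α β : ℕ → ℂ)
    (hpair : ∀ n : ℕ, β n = ∑ k ∈ Finset.range (n + 1),
        α k / (qp q q (n - k) * qp q (a * q) (n + k))) (m : ℕ) :
    qp q (a * q) m * (-1 : ℂ) ^ m * q ^ (m * (m + 1) / 2) / qp q q m *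
        ∑ n ∈ Finset.range (m + 1), qp q (q ^ (-(m : ℤ))) n * qp q (a * q ^ (m + 1)) n * β n
      = ∑ n ∈ Finset.range (m + 1), α n := by
  have hq : q ≠ 0 := by intro h; rw [h] at h0; simp at h0
  set w : ℂ := q ^ (-(m : ℤ)) with hw_def
  set c : ℂ := qp q (a * q) m * (-1 : ℂ) ^ m * q ^ (m * (m + 1) / 2) / qp q q m with hc
  have hsum : ∑ n ∈ Finset.range (m + 1), qp q w n * qp q (a * q ^ (m + 1)) n * β n
      = ∑ k ∈ Finset.range (m + 1), α k * (∑ j ∈ Finset.range (m - k + 1),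
          qp q w (k + j) * qp q (a * q ^ (m + 1)) (k + j) /
            (qp q q j * qp q (a * q) (k + j + k))) := by
    calc ∑ n ∈ Finset.range (m + 1), qp q w n * qp q (a * q ^ (m + 1)) n * β n
        = ∑ n ∈ Finset.range (m + 1), ∑ k ∈ Finset.range (n + 1),
            qp q w n * qp q (a * q ^ (m + 1)) n *
              (α k / (qp q q (n - k) * qp q (a * q) (n + k))) := by
          apply Finset.sum_congr rfl
          intro n _
          rw [hpair n, Finset.mul_sum]
      _ = ∑ k ∈ Finset.range (m + 1), ∑ n ∈ Finset.Ico k (m + 1),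
            qp q w n * qp q (a * q ^ (m + 1)) n *
              (α k / (qp q q (n - k) * qp q (a * q) (n + k))) :=
          tri_swap m _
      _ = ∑ k ∈ Finset.range (m + 1), α k * (∑ j ∈ Finset.range (m - k + 1),
            qp q w (k + j) * qp q (a * q ^ (m + 1)) (k + j) /
              (qp q q j * qp q (a * q) (k + j + k))) := by
          apply Finset.sum_congr rfl
          intro k hkmem
          have hkm : k ≤ m := by
            have := Finset.mem_range.1 hkmem; omega
          rw [Finset.sum_Ico_eq_sum_range, Finset.mul_sum,
            show m + 1 - k = m - k + 1 from by omega]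
          apply Finset.sum_congr rfl
          intro j _
          rw [show k + j - k = j from by omega]
          ring
  rw [hsum, Finset.mul_sum]
  apply Finset.sum_congr rfl
  intro k hkmem
  have hkm : k ≤ m := by
    have := Finset.mem_range.1 hkmem; omega
  rw [key_lemma q a h0 h1 ha m (m - k) k (by omega)]
  -- now show c * (α k * R) = α k
  have hF1 := F1 q hq m
  rw [← hw_def] at hF1
  have hqp1 : qp q q m ≠ 0 := qpq_ne q h1 m
  have hqp2 : qp q (a * q) m ≠ 0 := qpa_ne q a ha m
  have hqp3 : qp q (a * q ^ (m + 1)) m ≠ 0 := qpam_ne q a ha m m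
  rw [F2 q a m, mul_div_mul_right _ _ hqp3, hc]
  have hsq : ((-1 : ℂ) ^ m) * ((-1 : ℂ) ^ m) = 1 := by
    rw [← pow_add, ← two_mul, pow_mul]; norm_num
  have hAinv := mul_inv_cancel₀ hqp2
  have hPinv := mul_inv_cancel₀ hqp1
  linear_combination (α k * ((-1 : ℂ) ^ m * q ^ (m * (m + 1) / 2) * qp q w m *
      (qp q q m)⁻¹)) * hAinv
    + (α k * ((-1 : ℂ) ^ m * (qp q q m)⁻¹)) * hF1
    + (α k * ((-1 : ℂ) ^ m * (-1 : ℂ) ^ m)) * hPinv + (α k) * hsq
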